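/- For every non-negative integer n, the image of θⁿ equals F̃(n). -/

import Mathlib

open Submodule

/-- The projection onto `A` along a complement `B`, as an endomorphism of `E`. -/
noncomputable def projAlong {K E : Type*} [Field K] [AddCommGroup E] [Module K E]
    (A B : Submodule K E) (h : IsCompl A B) : E →ₗ[K] E :=
  A.subtype ∘ₗ A.linearProjOfIsCompl B h

/-- `θ = p_{W₁}^{W₂} ∘ p_{V₁}^{V₂} − p_{V₁}^{V₂} ∘ p_{W₁}^{W₂}`. -/
noncomputable def theta {K E : Type*} [Field K] [AddCommGroup E] [Module K E]
    (V W : Fin 2 → Submodule K E)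
    (hV : IsCompl (V 0) (V 1)) (hW : IsCompl (W 0) (W 1)) : Module.End K E :=
  projAlong (W 0) (W 1) hW ∘ₗ projAlong (V 0) (V 1) hV -
    projAlong (V 0) (V 1) hV ∘ₗ projAlong (W 0) (W 1) hW

/-- The decreasing sequence of subspaces `F̃(n)`:
`F̃(0) = E`, `F̃(n+1) = ∩_{i,j} ((F̃(n) ∩ Vᵢ) + (F̃(n) ∩ Wⱼ))`. -/
noncomputable def FTilde {K E : Type*} [Field K] [AddCommGroup E] [Module K E]
    (V W : Fin 2 → Submodule K E) : ℕ → Submodule K E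
  | 0 => ⊤
  | n + 1 => ⨅ i : Fin 2, ⨅ j : Fin 2, (FTilde V W n ⊓ V i) ⊔ (FTilde V W n ⊓ W j)

/-!
With `P`, `Q` the two projections, `θ = QP - PQ` satisfies `Pθ = θ(1 - P)` and `Qθ = θ(1 - Q)`,
so every `im θⁿ` is stable under `P` and `Q`. For a subspace `F` stable under both,
`θ(F) = ⋂ᵢⱼ (F ∩ Vᵢ) + (F ∩ Wⱼ)`. One inclusion is `θu = (-PQu) + QPu` for `(i, j) = (0, 0)`;
replacing `Vᵢ` or `Wⱼ` by its complement only changes the sign of `θ`, which gives the other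
three. Conversely, if `x - aᵢⱼ ∈ F ∩ Wⱼ` with `aᵢⱼ ∈ F ∩ Vᵢ`, then
`x = θ(a₀₁ + a₁₀ - a₀₀ - a₁₁)`. Induction on `n` concludes.
-/

section Commutator

variable {R : Type*} [Ring R] {p : R}

theorem IsIdempotentElem.mul_commutator_left (hp : IsIdempotentElem p) (q : R) :
    p * (q * p - p * q) = (q * p - p * q) * (1 - p) := by
  have hp' : p * p = p := hp.eq
  simp only [mul_sub, sub_mul, mul_one, ← mul_assoc, hp']
  rw [mul_assoc q p p, hp']
  abel

theorem IsIdempotentElem.mul_commutator_right (hp : IsIdempotentElem p) (q : R) :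
    p * (p * q - q * p) = (p * q - q * p) * (1 - p) := by
  rw [← neg_sub, mul_neg, neg_mul, hp.mul_commutator_left]

end Commutator

section Invariant

variable {R M : Type*} [Ring R] [AddCommGroup M] [Module R M]

theorem Module.End.one_sub_mem_invtSubmodule {r : Module.End R M} {F : Submodule R M}
    (hF : F ∈ r.invtSubmodule) : F ∈ (1 - r).invtSubmodule :=
  fun _ hx ↦ F.sub_mem hx (hF hx)

theorem Module.End.range_pow_mem_invtSubmodule {r f : Module.End R M}
    (h : r * f = f * (1 - r)) (n : ℕ) : LinearMap.range (f ^ n) ∈ r.invtSubmodule := by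
  induction n with
  | zero => simp [Module.End.one_eq_id, LinearMap.range_id]
  | succ n ih =>
    rintro _ ⟨z, rfl⟩
    obtain ⟨w, hw⟩ := one_sub_mem_invtSubmodule ih (LinearMap.mem_range_self (f ^ n) z)
    refine ⟨w, ?_⟩
    calc (f ^ (n + 1)) w = f ((1 - r) ((f ^ n) z)) := by rw [pow_succ', Module.End.mul_apply, hw]
      _ = (r * f) ((f ^ n) z) := by rw [h]; rfl
      _ = r ((f ^ (n + 1)) z) := by rw [pow_succ']; rfl

theorem Submodule.map_commutator_le {p q : Module.End R M} {F : Submodule R M}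
    (hp : F ∈ p.invtSubmodule) (hq : F ∈ q.invtSubmodule) :
    F.map (q * p - p * q) ≤ F ⊓ LinearMap.range p ⊔ F ⊓ LinearMap.range q := by
  rintro _ ⟨u, hu, rfl⟩
  rw [LinearMap.sub_apply, sub_eq_neg_add]
  exact add_mem_sup ⟨F.neg_mem (hp (hq hu)), neg_mem (LinearMap.mem_range_self _ _)⟩
    ⟨hq (hp hu), LinearMap.mem_range_self _ _⟩

end Invariant

section Theta

open Module.End

variable {K E : Type*} [Field K] [AddCommGroup E] [Module K E]
  {V W : Fin 2 → Submodule K E} (hV : IsCompl (V 0) (V 1)) (hW : IsCompl (W 0) (W 1))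

theorem theta_eq_commutator :
    theta V W hV hW = (W 0).projection (W 1) hW * (V 0).projection (V 1) hV -
      (V 0).projection (V 1) hV * (W 0).projection (W 1) hW :=
  rfl

theorem theta_apply_alternating_sum {x : E} {a : Fin 2 → Fin 2 → E}
    (ha : ∀ i j, a i j ∈ V i) (hxa : ∀ i j, x - a i j ∈ W j) :
    theta V W hV hW (a 0 1 + a 1 0 - a 0 0 - a 1 1) = x := by
  set P := (V 0).projection (V 1) hV
  set Q := (W 0).projection (W 1) hW
  have hP0 : ∀ j, P (a 0 j) = a 0 j := fun j ↦ projection_apply_of_mem_left hV (ha 0 j)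
  have hP1 : ∀ j, P (a 1 j) = 0 := fun j ↦ projection_apply_of_mem_right hV (ha 1 j)
  have hQ0 : ∀ i, Q (x - a i 0) = x - a i 0 := fun i ↦ projection_apply_of_mem_left hW (hxa i 0)
  have hQ1 : ∀ i, Q (x - a i 1) = 0 := fun i ↦ projection_apply_of_mem_right hW (hxa i 1)
  have hPy : P (a 0 1 + a 1 0 - a 0 0 - a 1 1) = a 0 1 - a 0 0 := by
    simp only [map_add, map_sub, hP0, hP1]
    abel
  have hQPy : Q (a 0 1 - a 0 0) = x - a 0 0 := by
    rw [show a 0 1 - a 0 0 = (x - a 0 0) - (x - a 0 1) by abel, map_sub, hQ0, hQ1, sub_zero]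
  have hQy : Q (a 0 1 + a 1 0 - a 0 0 - a 1 1) = a 1 0 - a 0 0 := by
    rw [show a 0 1 + a 1 0 - a 0 0 - a 1 1 =
        ((x - a 0 0) - (x - a 1 0)) + ((x - a 1 1) - (x - a 0 1)) by abel]
    simp only [map_add, map_sub, hQ0, hQ1]
    abel
  have hPQy : P (a 1 0 - a 0 0) = -a 0 0 := by
    rw [map_sub, hP0, hP1, zero_sub]
  rw [theta_eq_commutator, LinearMap.sub_apply, Module.End.mul_apply, Module.End.mul_apply,
    hPy, hQPy, hQy, hPQy, sub_neg_eq_add, sub_add_cancel]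

theorem iInf_le_map_theta (F : Submodule K E) :
    ⨅ i, ⨅ j, (F ⊓ V i) ⊔ (F ⊓ W j) ≤ F.map (theta V W hV hW) := by
  intro x hx
  simp only [mem_iInf] at hx
  choose a ha b hb hab using fun i j ↦ mem_sup.mp (hx i j)
  have hxa : ∀ i j, x - a i j ∈ W j := fun i j ↦ by
    rw [← hab i j, add_sub_cancel_left]
    exact (hb i j).2
  refine ⟨a 0 1 + a 1 0 - a 0 0 - a 1 1, ?_,
    theta_apply_alternating_sum hV hW (fun i j ↦ (ha i j).2) hxa⟩
  exact F.sub_mem (F.sub_mem (F.add_mem (ha 0 1).1 (ha 1 0).1) (ha 0 0).1) (ha 1 1).1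

theorem map_theta_le_iInf {F : Submodule K E}
    (hFV : F ∈ invtSubmodule ((V 0).projection (V 1) hV))
    (hFW : F ∈ invtSubmodule ((W 0).projection (W 1) hW)) :
    F.map (theta V W hV hW) ≤ ⨅ i, ⨅ j, (F ⊓ V i) ⊔ (F ⊓ W j) := by
  have hP' := projection_eq_id_sub_projection hV
  have hQ' := projection_eq_id_sub_projection hW
  have hFV' := one_sub_mem_invtSubmodule hFV
  have hFW' := one_sub_mem_invtSubmodule hFW
  rw [← Module.End.one_eq_id] at hP' hQ'
  rw [← hP'] at hFV'
  rw [← hQ'] at hFW'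
  refine le_iInf fun i ↦ le_iInf fun j ↦ ?_
  fin_cases i <;> fin_cases j
  · simpa [theta_eq_commutator] using map_commutator_le hFV hFW
  · have hθ : theta V W hV hW = -((W 1).projection (W 0) hW.symm * (V 0).projection (V 1) hV -
        (V 0).projection (V 1) hV * (W 1).projection (W 0) hW.symm) := by
      rw [theta_eq_commutator, hQ']; noncomm_ring
    rw [hθ, Submodule.map_neg]
    simpa using map_commutator_le hFV hFW'
  · have hθ : theta V W hV hW = -((W 0).projection (W 1) hW * (V 1).projection (V 0) hV.symm -
        (V 1).projection (V 0) hV.symm * (W 0).projection (W 1) hW) := by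
      rw [theta_eq_commutator, hP']; noncomm_ring
    rw [hθ, Submodule.map_neg]
    simpa using map_commutator_le hFV' hFW
  · have hθ : theta V W hV hW = (W 1).projection (W 0) hW.symm * (V 1).projection (V 0) hV.symm -
        (V 1).projection (V 0) hV.symm * (W 1).projection (W 0) hW.symm := by
      rw [theta_eq_commutator, hP', hQ']; noncomm_ring
    simpa [hθ] using map_commutator_le hFV' hFW'

theorem map_theta_eq {F : Submodule K E}
    (hFV : F ∈ invtSubmodule ((V 0).projection (V 1) hV))
    (hFW : F ∈ invtSubmodule ((W 0).projection (W 1) hW)) :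
    F.map (theta V W hV hW) = ⨅ i, ⨅ j, (F ⊓ V i) ⊔ (F ⊓ W j) :=
  (map_theta_le_iInf hV hW hFV hFW).antisymm (iInf_le_map_theta hV hW F)

theorem range_theta_pow_mem_invtSubmodule_left (n : ℕ) :
    LinearMap.range (theta V W hV hW ^ n) ∈ invtSubmodule ((V 0).projection (V 1) hV) :=
  range_pow_mem_invtSubmodule ((isIdempotentElem_projection hV).mul_commutator_left _) n

theorem range_theta_pow_mem_invtSubmodule_right (n : ℕ) :
    LinearMap.range (theta V W hV hW ^ n) ∈ invtSubmodule ((W 0).projection (W 1) hW) :=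
  range_pow_mem_invtSubmodule ((isIdempotentElem_projection hW).mul_commutator_right _) n

end Theta

theorem stmt2_general {K E : Type*} [Field K] [AddCommGroup E] [Module K E]
    (V W : Fin 2 → Submodule K E)
    (hV : IsCompl (V 0) (V 1)) (hW : IsCompl (W 0) (W 1)) :
    ∀ n : ℕ, LinearMap.range ((theta V W hV hW) ^ n) = FTilde V W n := by
  intro n
  induction n with
  | zero => simp [FTilde, Module.End.one_eq_id]
  | succ n ih =>
    rw [pow_succ', Module.End.mul_eq_comp, LinearMap.range_comp,
      map_theta_eq hV hW (range_theta_pow_mem_invtSubmodule_left hV hW n)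
        (range_theta_pow_mem_invtSubmodule_right hV hW n), ih, FTilde]

/-- For every `n`, `im θⁿ = F̃(n)`. -/
theorem stmt2 {K E : Type*} [Field K] [AddCommGroup E] [Module K E]
    [FiniteDimensional K E] (hchar : (2 : K) ≠ 0)
    (V W : Fin 2 → Submodule K E)
    (hV : IsCompl (V 0) (V 1)) (hW : IsCompl (W 0) (W 1)) :
    ∀ n : ℕ, LinearMap.range ((theta V W hV hW) ^ n) = FTilde V W n :=
  stmt2_general V W hV hW
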